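/- (Lemma 2, upper bound) In the symmetric model, the average rate of the max-SINR scheduler satisfies R(n) ≤ log₂(ρ·log n) − (N−1)·log₂(log n)/log n + o(log(log n)/log n); that is, there is a function h with h(n)·log n/log(log n) → 0 such that for all sufficiently large n, E[log₂(1+Γ_n)] ≤ log₂(ρ·log n) − (N−1)·log₂(log n)/log n + h(n). -/

import Mathlib

open MeasureTheory ProbabilityTheory Filter Real

/-- The maximum of `f k` over the indices `k ∈ {1, …, n}`. -/
noncomputable def maxIcc (n : ℕ) (f : ℕ → ℝ) : ℝ :=
  ⨆ k : (Finset.Icc 1 n : Finset ℕ), f k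

/-!
Put `l = log n`, `a = ρ (l - (N - 1) log l)` and `θ = 1 - 1 / l`. Concavity of `log` gives
`log (1 + Γ) ≤ log (1 + a) + (Γ - a)⁺ / (1 + a)`, and `(Γ - a)⁺` is at most the sum over the `n`
users of `(SINRₖ - a)⁺`, each of which is bounded, Chernoff-style, by
`(ρ / θ) e^{-θ a / ρ} exp (θ G₀ₖ - θ a ∑ⱼ Gⱼₖ)`. By independence the expectation of the exponential
factorises into `(1 - θ)⁻¹ (1 + θ a)⁻ᴺ`, and for these choices of `a` and `θ` the total error
is `O(1 / log n)`, hence `o(log log n / log n)`.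
-/

namespace ProbabilityTheory

open Set

lemma expMeasure_eq_withDensity (r : ℝ) :
    expMeasure r = volume.withDensity (exponentialPDF r) := rfl

variable {Ω ι : Type*} [MeasurableSpace Ω] {P : Measure Ω} {X : Ω → ℝ} {r t : ℝ}

lemma measurable_exponentialPDF (r : ℝ) : Measurable (exponentialPDF r) :=
  (measurable_exponentialPDFReal r).ennreal_ofReal

lemma toReal_exponentialPDF_smul_exp_mul (hr : 0 ≤ r) (t : ℝ) :
    (fun x => (exponentialPDF r x).toReal • exp (t * x))
      = (Ici 0).indicator (fun x => r * exp ((t - r) * x)) := by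
  ext x
  by_cases hx : 0 ≤ x
  · rw [exponentialPDF_of_nonneg hx, ENNReal.toReal_ofReal (by positivity),
      indicator_of_mem (mem_Ici.2 hx), smul_eq_mul, mul_assoc, ← exp_add]
    ring_nf
  · rw [exponentialPDF_of_neg (not_le.1 hx), indicator_of_notMem (by simpa using hx)]
    simp

lemma integrable_exp_mul_expMeasure (hr : 0 < r) (ht : t < r) :
    Integrable (fun x => exp (t * x)) (expMeasure r) := by
  rw [expMeasure_eq_withDensity, integrable_withDensity_iff_integrable_smul'
    (measurable_exponentialPDF r) (ae_of_all _ fun _ => ENNReal.ofReal_lt_top),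
    toReal_exponentialPDF_smul_exp_mul hr.le, integrable_indicator_iff measurableSet_Ici,
    IntegrableOn, ← restrict_Ioi_eq_restrict_Ici]
  exact (integrableOn_exp_mul_Ioi (by linarith) 0).const_mul r

lemma mgf_id_expMeasure (hr : 0 < r) (ht : t < r) :
    mgf id (expMeasure r) t = r / (r - t) := by
  rw [mgf, expMeasure_eq_withDensity, integral_withDensity_eq_integral_toReal_smul
    (measurable_exponentialPDF r) (ae_of_all _ fun _ => ENNReal.ofReal_lt_top)]
  simp only [id]
  rw [toReal_exponentialPDF_smul_exp_mul hr.le,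
    integral_indicator measurableSet_Ici, integral_Ici_eq_integral_Ioi, integral_const_mul,
    integral_exp_mul_Ioi (by linarith), mul_zero, exp_zero, neg_div, ← div_neg, neg_sub,
    mul_one_div]

lemma mgf_of_map_eq_expMeasure (hX : AEMeasurable X P) (hlaw : P.map X = expMeasure r)
    (hr : 0 < r) (ht : t < r) : mgf X P t = r / (r - t) := by
  rw [← mgf_id_map hX, hlaw, mgf_id_expMeasure hr ht]

lemma integrable_exp_mul_of_map_eq_expMeasure (hX : AEMeasurable X P)
    (hlaw : P.map X = expMeasure r) (hr : 0 < r) (ht : t < r) :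
    Integrable (fun ω => exp (t * X ω)) P := by
  have hint := integrable_exp_mul_expMeasure hr ht
  rw [← hlaw] at hint
  exact hint.comp_aemeasurable hX

lemma ae_nonneg_of_map_eq_expMeasure (hX : AEMeasurable X P) (hlaw : P.map X = expMeasure r) :
    ∀ᵐ ω ∂P, 0 ≤ X ω := by
  refine ae_of_ae_map hX ?_
  rw [hlaw, ae_iff, expMeasure_eq_withDensity]
  simp only [not_le]
  change volume.withDensity (exponentialPDF r) (Iio 0) = 0
  rw [withDensity_apply _ measurableSet_Iio, lintegral_exponentialPDF_of_nonpos le_rfl]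

variable {G : ι → Ω → ℝ} {c : ι → ℝ} {s : Finset ι}

theorem iIndepFun.integrable_exp_sum_mul [IsFiniteMeasure P] (hindep : iIndepFun G P)
    (hmeas : ∀ i, Measurable (G i)) (hlaw : ∀ i, P.map (G i) = expMeasure r) (hr : 0 < r)
    (hc : ∀ i ∈ s, c i < r) :
    Integrable (fun ω => exp (∑ i ∈ s, c i * G i ω)) P := by
  have hY : iIndepFun (fun i ω => c i * G i ω) P :=
    hindep.comp (fun i x => c i * x) fun i => measurable_const_mul (c i)
  simpa using hY.integrable_exp_mul_sum (t := 1) (fun i => (hmeas i).const_mul (c i)) fun i hi => by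
    simpa using
      integrable_exp_mul_of_map_eq_expMeasure (hmeas i).aemeasurable (hlaw i) hr (hc i hi)

theorem iIndepFun.integral_exp_sum_mul (hindep : iIndepFun G P)
    (hmeas : ∀ i, Measurable (G i)) (hlaw : ∀ i, P.map (G i) = expMeasure r) (hr : 0 < r)
    (hc : ∀ i ∈ s, c i < r) :
    ∫ ω, exp (∑ i ∈ s, c i * G i ω) ∂P = ∏ i ∈ s, r / (r - c i) := by
  have hY : iIndepFun (fun i ω => c i * G i ω) P :=
    hindep.comp (fun i x => c i * x) fun i => measurable_const_mul (c i)
  have hsum := hY.mgf_sum (fun i => (hmeas i).const_mul (c i)) s (t := 1)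
  simp only [mgf_const_mul, mul_one] at hsum
  rw [Finset.prod_congr rfl fun i hi =>
    mgf_of_map_eq_expMeasure (hmeas i).aemeasurable (hlaw i) hr (hc i hi)] at hsum
  rw [← hsum, mgf]
  simp only [Finset.sum_apply, one_mul]

end ProbabilityTheory

lemma div_sub_le_inv_mul_exp {x d a c : ℝ} (hd : 1 ≤ d) (hc : 0 < c) :
    x / d - a ≤ c⁻¹ * exp (c * (x - a * d)) := by
  have hd0 : 0 < d := one_pos.trans_le hd
  calc x / d - a = (x - a * d) / d := by field_simp
    _ ≤ max (x - a * d) 0 := by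
        rcases le_or_gt (x - a * d) 0 with h | h
        · exact (div_nonpos_of_nonpos_of_nonneg h hd0.le).trans (le_max_right _ _)
        · exact (div_le_self h.le hd).trans (le_max_left _ _)
    _ ≤ c⁻¹ * exp (c * (x - a * d)) :=
        max_le (le_inv_mul_exp _ hc) (by positivity)

lemma log_le_log_add_sub_div {x y : ℝ} (hx : 0 < x) (hy : 0 < y) :
    log x ≤ log y + (x - y) / y := by
  have := log_le_sub_one_of_pos (div_pos hx hy)
  rw [log_div hx.ne' hy.ne', div_sub_one hy.ne'] at this
  linarith

lemma maxIcc_nonneg {n : ℕ} {f : ℕ → ℝ} (hf : ∀ k ∈ Finset.Icc 1 n, 0 ≤ f k) :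
    0 ≤ maxIcc n f :=
  Real.iSup_nonneg fun k => hf k k.2

lemma maxIcc_le_add_sum {n : ℕ} {f b : ℕ → ℝ} {a : ℝ} (hn : 1 ≤ n)
    (hb : ∀ k ∈ Finset.Icc 1 n, 0 ≤ b k) (hf : ∀ k ∈ Finset.Icc 1 n, f k - a ≤ b k) :
    maxIcc n f ≤ a + ∑ k ∈ Finset.Icc 1 n, b k := by
  have : Nonempty (Finset.Icc 1 n) := ⟨⟨1, Finset.mem_Icc.2 ⟨le_rfl, hn⟩⟩⟩
  refine ciSup_le fun k => ?_
  have := Finset.single_le_sum hb k.2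
  linarith [hf k k.2]

lemma log_one_add_le {ρ l c a : ℝ} (hρ : 0 < ρ) (hl : 0 < l) (ha : a = ρ * (l - c))
    (ha' : 0 < 1 + a) : log (1 + a) ≤ log (ρ * l) - c / l + 1 / (ρ * l) := by
  have := log_le_log_add_sub_div ha' (mul_pos hρ hl)
  have hsplit : (1 + a - ρ * l) / (ρ * l) = 1 / (ρ * l) - c / l := by
    rw [ha]; field_simp; ring
  linarith

lemma eventually_mul_log_le_half (c : ℝ) : ∀ᶠ x in atTop, c * log x ≤ x / 2 := by
  filter_upwards [(isLittleO_log_id_atTop.const_mul_left c).bound one_half_pos,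
    eventually_ge_atTop 0] with x hx hx0
  simp only [norm_mul, Real.norm_eq_abs, id, abs_of_nonneg hx0] at hx
  linarith [le_abs_self (c * log x), abs_mul c (log x)]

lemma exp_mul_chernoff_excess_le {N : ℕ} {ρ l a θ : ℝ} (hN : 1 ≤ N) (hρ : 0 < ρ) (hl : 2 ≤ l)
    (hNl : ((N : ℝ) - 1) * log l ≤ l / 2) (ha : a = ρ * (l - ((N : ℝ) - 1) * log l))
    (hθ : θ = 1 - 1 / l) :
    exp l * (ρ / θ * exp (-(θ * a / ρ))) * ((1 - θ)⁻¹ * ((1 + θ * a)⁻¹) ^ N) / (1 + a)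
      ≤ 4 ^ (N + 1) * exp 1 / ρ ^ N / l := by
  have hl0 : 0 < l := by linarith
  have hN1 : (0 : ℝ) ≤ (N : ℝ) - 1 := by
    have : (1 : ℝ) ≤ N := by exact_mod_cast hN
    linarith
  have hlog : 0 ≤ log l := log_nonneg (by linarith)
  have hθ_half : 1 / 2 ≤ θ := by
    rw [hθ]
    have : 1 / l ≤ 1 / 2 := one_div_le_one_div_of_le two_pos hl
    linarith
  have hθ1 : θ ≤ 1 := by
    rw [hθ]
    have : 0 < 1 / l := by positivity
    linarith
  have ha2 : ρ * l / 2 ≤ a := by rw [ha]; nlinarith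
  have hθa : ρ * l / 4 ≤ θ * a := by
    nlinarith [mul_le_mul hθ_half ha2 (by positivity) (by linarith)]
  have hθ0 : 0 < θ := by linarith
  have ha0 : 0 < a := by nlinarith
  have hexp : exp l * exp (-(θ * a / ρ)) ≤ exp 1 * l ^ ((N : ℝ) - 1) := by
    have hsum : l + -(θ * a / ρ) = 1 + θ * (((N : ℝ) - 1) * log l) := by
      rw [ha, hθ]; field_simp; ring
    rw [← exp_add, hsum, rpow_def_of_pos hl0, ← exp_add, mul_comm (log l)]
    exact exp_le_exp.2 (by nlinarith [mul_le_mul_of_nonneg_right hθ1 (mul_nonneg hN1 hlog)])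
  calc exp l * (ρ / θ * exp (-(θ * a / ρ))) * ((1 - θ)⁻¹ * ((1 + θ * a)⁻¹) ^ N) / (1 + a)
      = ρ * (exp l * exp (-(θ * a / ρ))) * l / (θ * (1 + θ * a) ^ N * (1 + a)) := by
        rw [show (1 - θ)⁻¹ = l by rw [hθ]; field_simp; ring, inv_pow]
        field_simp
    _ ≤ ρ * (exp 1 * l ^ ((N : ℝ) - 1)) * l / (1 / 2 * (ρ * l / 4) ^ N * (ρ * l / 2)) := by
        gcongr <;> first | positivity | linarith
    _ = 4 ^ (N + 1) * exp 1 / ρ ^ N / l := by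
        rw [rpow_sub_one hl0.ne', rpow_natCast, div_pow, mul_pow]
        field_simp
        ring

section MaxSINR

variable {Ω : Type*} {N : ℕ} {ρ a θ : ℝ} {G : Option (Fin N) × ℕ → Ω → ℝ}

noncomputable def sinr (ρ : ℝ) (G : Option (Fin N) × ℕ → Ω → ℝ) (k : ℕ) (ω : Ω) : ℝ :=
  ρ * G (none, k) ω / (1 + ρ * ∑ j, G (some j, k) ω)

lemma sinr_nonneg {k : ℕ} {ω : Ω} (hρ : 0 ≤ ρ) (hG : ∀ i, 0 ≤ G (i, k) ω) :
    0 ≤ sinr ρ G k ω := by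
  have : 0 ≤ ∑ j, G (some j, k) ω := Finset.sum_nonneg fun j _ => hG _
  unfold sinr
  have := hG none
  positivity

lemma sinr_sub_le_mul_exp {k : ℕ} {ω : Ω} (hρ : 0 < ρ) (hθ : 0 < θ)
    (hG : ∀ j, 0 ≤ G (some j, k) ω) (a : ℝ) :
    sinr ρ G k ω - a ≤ ρ / θ * exp (-(θ * a / ρ))
      * exp (θ * G (none, k) ω - θ * a * ∑ j, G (some j, k) ω) := by
  have hd : 1 ≤ 1 + ρ * ∑ j, G (some j, k) ω := by
    have : 0 ≤ ∑ j, G (some j, k) ω := Finset.sum_nonneg fun j _ => hG j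
    nlinarith
  refine (div_sub_le_inv_mul_exp hd (div_pos hθ hρ)).trans_eq ?_
  rw [inv_div, mul_assoc, ← exp_add]
  congr 2
  field_simp
  ring

lemma sum_option_elim_mul (θ a : ℝ) (k : ℕ) (ω : Ω) :
    ∑ i, i.elim θ (fun _ => -(θ * a)) * G (i, k) ω
      = θ * G (none, k) ω - θ * a * ∑ j, G (some j, k) ω := by
  rw [Fintype.sum_option]
  simp only [Option.elim, neg_mul, Finset.sum_neg_distrib, Finset.mul_sum]
  ring

variable [MeasurableSpace Ω] {P : Measure Ω}

lemma integrable_exp_signal_sub_interference [IsFiniteMeasure P] (hindep : iIndepFun G P)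
    (hmeas : ∀ i, Measurable (G i)) (hlaw : ∀ i, P.map (G i) = expMeasure 1)
    (hθ : θ < 1) (hθa : -1 < θ * a) (k : ℕ) :
    Integrable (fun ω => exp (θ * G (none, k) ω - θ * a * ∑ j, G (some j, k) ω)) P := by
  simp_rw [← sum_option_elim_mul]
  refine (hindep.precomp (Prod.mk_left_injective k)).integrable_exp_sum_mul
    (fun i => hmeas _) (fun i => hlaw _) one_pos fun i _ => ?_
  cases i with
  | none => exact hθ
  | some j => simp only [Option.elim]; linarith

lemma integral_exp_signal_sub_interference (hindep : iIndepFun G P)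
    (hmeas : ∀ i, Measurable (G i)) (hlaw : ∀ i, P.map (G i) = expMeasure 1)
    (hθ : θ < 1) (hθa : -1 < θ * a) (k : ℕ) :
    ∫ ω, exp (θ * G (none, k) ω - θ * a * ∑ j, G (some j, k) ω) ∂P
      = (1 - θ)⁻¹ * ((1 + θ * a)⁻¹) ^ N := by
  simp_rw [← sum_option_elim_mul]
  rw [(hindep.precomp (Prod.mk_left_injective k)).integral_exp_sum_mul
    (fun i => hmeas _) (fun i => hlaw _) one_pos fun i _ => ?_]
  · simp only [Fintype.prod_option, Option.elim, one_div, sub_neg_eq_add, Finset.prod_const,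
      Finset.card_univ, Fintype.card_fin, inv_pow]
  cases i with
  | none => exact hθ
  | some j => simp only [Option.elim]; linarith

theorem integral_log_one_add_maxIcc_sinr_le [IsProbabilityMeasure P] (hρ : 0 < ρ)
    (hindep : iIndepFun G P) (hmeas : ∀ i, Measurable (G i))
    (hlaw : ∀ i, P.map (G i) = expMeasure 1) {n : ℕ} (hn : 1 ≤ n) (ha : 0 ≤ a)
    (hθ0 : 0 < θ) (hθ1 : θ < 1) :
    ∫ ω, log (1 + maxIcc n (fun k => sinr ρ G k ω)) ∂P
      ≤ log (1 + a) + n * (ρ / θ * exp (-(θ * a / ρ))) * ((1 - θ)⁻¹ * ((1 + θ * a)⁻¹) ^ N)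
          / (1 + a) := by
  set K := ρ / θ * exp (-(θ * a / ρ))
  set W : ℕ → Ω → ℝ := fun k ω => exp (θ * G (none, k) ω - θ * a * ∑ j, G (some j, k) ω)
  have hθa : -1 < θ * a := by nlinarith
  have hW : ∀ k, Integrable (W k) P :=
    integrable_exp_signal_sub_interference hindep hmeas hlaw hθ1 hθa
  have hexcess : Integrable (fun ω => K * (∑ k ∈ Finset.Icc 1 n, W k ω) / (1 + a)) P :=
    ((integrable_finsetSum _ fun k _ => hW k).const_mul K).div_const _
  set F : Ω → ℝ := fun ω => log (1 + a) + K * (∑ k ∈ Finset.Icc 1 n, W k ω) / (1 + a)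
  have hbound : ∀ᵐ ω ∂P, 0 ≤ log (1 + maxIcc n (fun k => sinr ρ G k ω))
      ∧ log (1 + maxIcc n (fun k => sinr ρ G k ω)) ≤ F ω := by
    filter_upwards [ae_all_iff.2 fun i =>
      ae_nonneg_of_map_eq_expMeasure (hmeas i).aemeasurable (hlaw i)] with ω hG
    set Γ := maxIcc n (fun k => sinr ρ G k ω)
    have hΓ0 : 0 ≤ Γ := maxIcc_nonneg fun k _ => sinr_nonneg hρ.le fun i => hG _
    have hΓa : Γ - a ≤ K * ∑ k ∈ Finset.Icc 1 n, W k ω := by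
      rw [Finset.mul_sum, sub_le_iff_le_add']
      exact maxIcc_le_add_sum hn (fun k _ => by positivity)
        fun k _ => sinr_sub_le_mul_exp hρ hθ0 (fun j => hG _) a
    refine ⟨log_nonneg (by linarith), ?_⟩
    calc log (1 + Γ) ≤ log (1 + a) + (1 + Γ - (1 + a)) / (1 + a) :=
          log_le_log_add_sub_div (by linarith) (by linarith)
      _ ≤ F ω := by
          simp only [F]
          gcongr
          linarith
  calc ∫ ω, log (1 + maxIcc n (fun k => sinr ρ G k ω)) ∂P
      ≤ ∫ ω, F ω ∂P :=
        integral_mono_of_nonneg (hbound.mono fun ω h => h.1) ((integrable_const _).add hexcess)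
          (hbound.mono fun ω h => h.2)
    _ = _ := by
      rw [integral_add (integrable_const _) hexcess, integral_div, integral_const_mul,
        integral_finsetSum _ fun k _ => hW k]
      simp only [W, integral_exp_signal_sub_interference hindep hmeas hlaw hθ1 hθa,
        Finset.sum_const, Nat.card_Icc, add_tsub_cancel_right, nsmul_eq_mul, integral_const,
        probReal_univ, one_smul]
      ring

theorem integral_log_one_add_maxIcc_sinr_le_log [IsProbabilityMeasure P] (hN : 1 ≤ N)
    (hρ : 0 < ρ) (hindep : iIndepFun G P) (hmeas : ∀ i, Measurable (G i))
    (hlaw : ∀ i, P.map (G i) = expMeasure 1) {n : ℕ} (hn : 1 ≤ n) (hl : 2 ≤ log n)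
    (hNl : ((N : ℝ) - 1) * log (log n) ≤ log n / 2) :
    ∫ ω, log (1 + maxIcc n (fun k => sinr ρ G k ω)) ∂P
      ≤ log (ρ * log n) - ((N : ℝ) - 1) * log (log n) / log n
          + (1 / ρ + 4 ^ (N + 1) * exp 1 / ρ ^ N) / log n := by
  set l := log (n : ℝ)
  obtain ⟨a, ha⟩ : ∃ a, a = ρ * (l - ((N : ℝ) - 1) * log l) := ⟨_, rfl⟩
  have ha0 : 0 < a := by
    have : (1 : ℝ) ≤ N := by exact_mod_cast hN
    rw [ha]; nlinarith
  have hl_inv : 0 < 1 / l ∧ 1 / l ≤ 1 / 2 := ⟨by positivity, one_div_le_one_div_of_le two_pos hl⟩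
  have hmain := integral_log_one_add_maxIcc_sinr_le (a := a) (θ := 1 - 1 / l) hρ hindep hmeas
    hlaw hn ha0.le (by linarith) (by linarith)
  rw [← exp_log (show (0 : ℝ) < n by exact_mod_cast hn)] at hmain
  have hlog_a := log_one_add_le hρ (by linarith) ha (by linarith)
  have hexcess := exp_mul_chernoff_excess_le hN hρ hl hNl ha rfl
  have hsplit : (1 / ρ + 4 ^ (N + 1) * exp 1 / ρ ^ N) / l
      = 1 / (ρ * l) + 4 ^ (N + 1) * exp 1 / ρ ^ N / l := by
    field_simp
  linarith

end MaxSINR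

/-- Lemma 2, upper bound: in the symmetric model, the average rate of the max-SINR
scheduler satisfies
`E[log₂(1+Γ n)] ≤ log₂(ρ log n) - (N-1) log₂(log n)/log n + o(log(log n)/log n)`. -/
theorem maxSINR_rate_upper_bound
    {Ω : Type*} [MeasurableSpace Ω] (P : Measure Ω) [IsProbabilityMeasure P]
    (N : ℕ) (hN : 1 ≤ N) (ρ : ℝ) (hρ : 0 < ρ)
    (G : Option (Fin N) × ℕ → Ω → ℝ) (hGmeas : ∀ i, Measurable (G i))
    (hGindep : iIndepFun G P)
    (hGdist : ∀ i, Measure.map (G i) P = expMeasure 1)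
    (α β : ℕ → Ω → ℝ)
    (hα : ∀ k ω, α k ω = ρ * G (none, k) ω)
    (hβ : ∀ k ω, β k ω = ρ * ∑ j : Fin N, G (some j, k) ω)
    (Γ : ℕ → Ω → ℝ) (hΓ : ∀ n ω, Γ n ω = maxIcc n (fun k => α k ω / (1 + β k ω))) :
    ∃ h : ℕ → ℝ,
      Tendsto (fun n : ℕ => h n * Real.log n / Real.log (Real.log n)) atTop (nhds 0) ∧
      ∀ᶠ n : ℕ in atTop,
        (∫ ω, Real.logb 2 (1 + Γ n ω) ∂P)
          ≤ Real.logb 2 (ρ * Real.log n)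
            - ((N : ℝ) - 1) * Real.logb 2 (Real.log n) / Real.log n + h n := by
  have hΓ_sinr : ∀ n ω, Γ n ω = maxIcc n (fun k => sinr ρ G k ω) := fun n ω => by
    simp only [hΓ, hα, hβ, sinr]
  have hlog : Tendsto (fun n : ℕ => log n) atTop atTop :=
    tendsto_log_atTop.comp tendsto_natCast_atTop_atTop
  set C := 1 / ρ + 4 ^ (N + 1) * exp 1 / ρ ^ N
  refine ⟨fun n => C / log 2 / log n, ?_, ?_⟩
  · refine ((tendsto_const_nhds (x := C / log 2)).div_atTop
      (tendsto_log_atTop.comp hlog)).congr' ?_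
    filter_upwards [hlog.eventually_gt_atTop 0] with n hn
    simp only [Function.comp_apply]
    field_simp
  filter_upwards [eventually_ge_atTop 1, hlog.eventually_ge_atTop 2,
    hlog.eventually (eventually_mul_log_le_half ((N : ℝ) - 1))] with n hn hl hNl
  simp only [logb, integral_div, hΓ_sinr]
  calc (∫ ω, log (1 + maxIcc n (fun k => sinr ρ G k ω)) ∂P) / log 2
      ≤ (log (ρ * log n) - ((N : ℝ) - 1) * log (log n) / log n + C / log n) / log 2 := by
        gcongr
        exact integral_log_one_add_maxIcc_sinr_le_log hN hρ hGindep hGmeas hGdist hn hl hNl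
    _ = _ := by ring
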